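/- arXiv:math/0703764 — 2 statements merged into one kernel-verified Lean document; each statement's English description precedes it below -/
import Mathlib

section
/- Let W be an affine Weyl group realized on alcoves, and for x,y ∈ W let H(A,B) denote the set of hyperplanes separating alcoves A and B, and H_{x,y} = H(A_0, yA_0) ∩ H(yA_0, xyA_0). If x < xs and y < sy for some s ∈ S, then H_{xs,y} = H_{x,sy}. -/
/-! Geometric realization of an irreducible affine Weyl group acting on the set of
alcoves of the affine hyperplane arrangement `F = {H_{α,n}}` in a Euclidean space. -/

/-- The underlying data of the geometric realization: a Euclidean space `V = ℝ^r`,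
a (finite) set `Phi` of positive roots with coroot map, a Coxeter system `(W,S)`,
an action of `W` on `V` realizing the action on alcoves, together with, for each
`s ∈ S` and `w ∈ W`, the wall `wall s w` crossed between the alcoves `wA₀` and `swA₀`,
the orthogonal reflections in the hyperplanes of `F`, a weight function `L` on `W`
and the induced weights `cH` on hyperplanes. -/
structure AlcoveData where
  r : ℕ
  B : Type
  W : Type
  [grp : Group W]
  M : CoxeterMatrix B
  cs : CoxeterSystem M W
  Phi : Finset (EuclideanSpace ℝ (Fin r))
  coroot : EuclideanSpace ℝ (Fin r) → EuclideanSpace ℝ (Fin r)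
  act : W →* Equiv.Perm (EuclideanSpace ℝ (Fin r))
  wall : B → W → ({α : EuclideanSpace ℝ (Fin r) // α ∈ Phi} × ℤ)
  reflPt : ({α : EuclideanSpace ℝ (Fin r) // α ∈ Phi} × ℤ) → Equiv.Perm (EuclideanSpace ℝ (Fin r))
  reflHyp : ({α : EuclideanSpace ℝ (Fin r) // α ∈ Phi} × ℤ) →
    ({α : EuclideanSpace ℝ (Fin r) // α ∈ Phi} × ℤ) → ({α : EuclideanSpace ℝ (Fin r) // α ∈ Phi} × ℤ)
  L : W → ℤ
  cH : ({α : EuclideanSpace ℝ (Fin r) // α ∈ Phi} × ℤ) → ℤ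

attribute [instance] AlcoveData.grp

namespace AlcoveData

variable (S : AlcoveData)

/-- The ambient Euclidean space `V`. -/
abbrev V := EuclideanSpace ℝ (Fin S.r)

/-- The index type for the hyperplanes `H_{α,n} ∈ F`: a positive root (the direction)
together with an integer. -/
abbrev Hyp := ({α : EuclideanSpace ℝ (Fin S.r) // α ∈ S.Phi} × ℤ)

/-- `⟨x, α̌⟩`, the pairing of a point with the coroot of `α`. -/
noncomputable def pair (x α : S.V) : ℝ := inner ℝ x (S.coroot α)

/-- The hyperplane `H_{α,n} = {x ∈ V : ⟨x, α̌⟩ = n}`. -/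
def hypSet (H : S.Hyp) : Set S.V := {x | S.pair x H.1.1 = (H.2 : ℝ)}

/-- The fundamental alcove `A₀`. -/
def A0 : Set S.V := {x | ∀ α ∈ S.Phi, 0 < S.pair x α ∧ S.pair x α < 1}

/-- The alcove `wA₀`. -/
def alcove (w : S.W) : Set S.V := (S.act w) '' S.A0

/-- `H` separates the subsets `A` and `C` of `V`. -/
def Separates (H : S.Hyp) (A C : Set S.V) : Prop :=
  (A ⊆ {x | S.pair x H.1.1 < (H.2 : ℝ)} ∧ C ⊆ {x | (H.2 : ℝ) < S.pair x H.1.1}) ∨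
  (C ⊆ {x | S.pair x H.1.1 < (H.2 : ℝ)} ∧ A ⊆ {x | (H.2 : ℝ) < S.pair x H.1.1})

/-- `H(A,C)`: the set of hyperplanes of `F` separating `A` and `C`. -/
def sep (A C : Set S.V) : Set S.Hyp := {H | S.Separates H A C}

/-- `H_{x,y} = H(A₀, yA₀) ∩ H(yA₀, xyA₀)`. -/
def Hxy (x y : S.W) : Set S.Hyp :=
  S.sep S.A0 (S.alcove y) ∩ S.sep (S.alcove y) (S.alcove (x * y))

/-- `I_{x,y}`: the set of directions of hyperplanes occurring in `H_{x,y}`. -/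
def dirs (x y : S.W) : Set {α : EuclideanSpace ℝ (Fin S.r) // α ∈ S.Phi} :=
  (fun H : S.Hyp => H.1) '' S.Hxy x y

/-- `c_{x,y}(i)`: the maximal weight of a hyperplane of direction `i` in `H_{x,y}`. -/
noncomputable def cdir (x y : S.W) (i : {α : EuclideanSpace ℝ (Fin S.r) // α ∈ S.Phi}) : ℤ :=
  sSup (S.cH '' {H : S.Hyp | H ∈ S.Hxy x y ∧ H.1 = i})

/-- `c_{x,y} = Σ_{i ∈ I_{x,y}} c_{x,y}(i)`. -/
noncomputable def cXY (x y : S.W) : ℤ := ∑ᶠ i ∈ S.dirs x y, S.cdir x y i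

end AlcoveData

/-- The geometric realization: the data above subject to the defining geometric
properties (wall-crossing, behaviour of separating sets, reflections, weights). -/
structure AlcoveSetup extends AlcoveData where
  /-- `wall s w` is the unique hyperplane separating `wA₀` and `swA₀`. -/
  wall_sep : ∀ (s : B) (w : W),
    toAlcoveData.sep (toAlcoveData.alcove w) (toAlcoveData.alcove (cs.simple s * w))
      = {wall s w}
  /-- Separating sets of alcoves compose via symmetric difference. -/
  sep_symmDiff : ∀ a b c : W,
    toAlcoveData.sep (toAlcoveData.alcove a) (toAlcoveData.alcove c)
      = symmDiff (toAlcoveData.sep (toAlcoveData.alcove a) (toAlcoveData.alcove b))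
          (toAlcoveData.sep (toAlcoveData.alcove b) (toAlcoveData.alcove c))
  /-- Crossing a wall in the direction increasing the length adds that wall. -/
  cross_up : ∀ (s : B) (w : W), cs.length (cs.simple s * w) = cs.length w + 1 →
    wall s w ∉ toAlcoveData.sep toAlcoveData.A0 (toAlcoveData.alcove w) ∧
    toAlcoveData.sep toAlcoveData.A0 (toAlcoveData.alcove (cs.simple s * w))
      = insert (wall s w) (toAlcoveData.sep toAlcoveData.A0 (toAlcoveData.alcove w))
  /-- Crossing a wall in the direction decreasing the length removes that wall. -/
  cross_down : ∀ (s : B) (w : W), cs.length (cs.simple s * w) + 1 = cs.length w →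
    wall s w ∈ toAlcoveData.sep toAlcoveData.A0 (toAlcoveData.alcove w) ∧
    toAlcoveData.sep toAlcoveData.A0 (toAlcoveData.alcove (cs.simple s * w))
      = toAlcoveData.sep toAlcoveData.A0 (toAlcoveData.alcove w) \ {wall s w}
  /-- Only finitely many hyperplanes separate two alcoves. -/
  sep_finite : ∀ w : W, (toAlcoveData.sep toAlcoveData.A0 (toAlcoveData.alcove w)).Finite
  /-- `reflPt H` is the orthogonal reflection with fixed point set the hyperplane `H`. -/
  reflPt_fix : ∀ (H : toAlcoveData.Hyp) (x : toAlcoveData.V),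
    x ∈ toAlcoveData.hypSet H → reflPt H x = x
  reflPt_invol : ∀ (H : toAlcoveData.Hyp) (x : toAlcoveData.V), reflPt H (reflPt H x) = x
  reflPt_pair : ∀ (H : toAlcoveData.Hyp) (x : toAlcoveData.V) (α : EuclideanSpace ℝ (Fin r)),
    α ∈ Phi → ∃ β ∈ Phi, |toAlcoveData.pair (reflPt H x) β| = |toAlcoveData.pair x α|
  /-- The reflection in `H` maps each hyperplane `K ∈ F` onto the hyperplane `reflHyp H K`. -/
  reflHyp_spec : ∀ H K : toAlcoveData.Hyp,
    (reflPt H) '' toAlcoveData.hypSet K = toAlcoveData.hypSet (reflHyp H K)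
  /-- The reflection `σ_s` in the wall separating `wA₀` and `swA₀` commutes with the
  left action of `W`: it maps `uwA₀` to `uswA₀` for every `u`. -/
  reflPt_wall_alcove : ∀ (s : B) (w u : W),
    (reflPt (wall s w)) '' toAlcoveData.alcove (u * w)
      = toAlcoveData.alcove (u * cs.simple s * w)
  /-- `L` is a positive weight function on `W`. -/
  L_add : ∀ x y : W, cs.length (x * y) = cs.length x + cs.length y → L (x * y) = L x + L y
  L_pos : ∀ w : W, w ≠ 1 → 0 < L w
  /-- The weight of the wall separating `wA₀` and `swA₀` is `L(s)`. -/
  cH_wall : ∀ (s : B) (w : W), cH (wall s w) = L (cs.simple s)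

/-! Write `N(w) = H(A₀, wA₀)`. Since `H(yA₀, zA₀) = N(y) ∆ N(z)`, we get `H_{x,y} = N(y) \ N(xy)`,
and `N(sy) = N(y) ∪ {H_s}`; so the claim reduces to `H_s ∈ N(xsy)`. This goes by induction on
`ℓ(x)`: writing `x = t x'` with `ℓ(x') < ℓ(x)`, `N(xsy)` and `N(x'sy)` differ only in the wall `H'`
between `x'syA₀` and `xsyA₀`. If `H' = H_s`, the reflection in it would send `x'syA₀` both to
`xsyA₀` and to `x'yA₀`, forcing `xs = x'`, which contradicts `ℓ(xs) = ℓ(x) + 1`. -/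

namespace AlcoveSetup

open AlcoveData

variable {S : AlcoveSetup}

variable (S) in
def sepA0 (w : S.W) : Set S.Hyp := S.sep S.A0 (S.alcove w)

theorem alcove_mul (u w : S.W) : S.alcove (u * w) = S.act u '' S.alcove w := by
  simp only [alcove, map_mul, Equiv.Perm.coe_mul, Set.image_comp]

theorem alcove_one : S.alcove (1 : S.W) = S.A0 := by
  simp [alcove]

theorem sep_comm (A C : Set S.V) : S.sep A C = S.sep C A :=
  Set.ext fun _ => or_comm

theorem sep_alcove_self (w : S.W) : S.sep (S.alcove w) (S.alcove w) = ∅ := by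
  have h := S.sep_symmDiff w w w
  rwa [symmDiff_self] at h

theorem sep_alcove_eq_symmDiff (b c : S.W) :
    S.sep (S.alcove b) (S.alcove c) = symmDiff (S.sepA0 b) (S.sepA0 c) := by
  rw [S.sep_symmDiff b 1 c, alcove_one, sep_comm, sepA0, sepA0]

theorem sepA0_simple_mul (t : S.B) (v : S.W) :
    S.sepA0 (S.cs.simple t * v) = symmDiff (S.sepA0 v) {S.wall t v} := by
  rw [sepA0, ← alcove_one, S.sep_symmDiff 1 v, S.wall_sep, alcove_one]
  rfl

theorem sepA0_nonempty_of_ne_one {w : S.W} (hw : w ≠ 1) : (S.sepA0 w).Nonempty := by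
  obtain ⟨t, ht⟩ := S.cs.exists_leftDescent_of_ne_one hw
  have hup : S.cs.length (S.cs.simple t * (S.cs.simple t * w))
      = S.cs.length (S.cs.simple t * w) + 1 := by
    rw [S.cs.simple_mul_simple_cancel_left]
    exact (S.cs.isLeftDescent_iff.mp ht).symm
  have h := (S.cross_up t _ hup).2
  rw [S.cs.simple_mul_simple_cancel_left] at h
  exact ⟨_, (h ▸ Set.mem_insert _ _ : _ ∈ S.sepA0 w)⟩

theorem alcove_injective : Function.Injective S.alcove := by
  intro a b hab
  have h : S.alcove (a⁻¹ * b) = S.alcove 1 := by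
    rw [alcove_mul, ← hab, ← alcove_mul, inv_mul_cancel]
  have hempty : S.sepA0 (a⁻¹ * b) = ∅ := by
    rw [sepA0, h, ← alcove_one, sep_alcove_self]
  by_contra hne
  exact (sepA0_nonempty_of_ne_one (mt inv_mul_eq_one.mp hne)).ne_empty hempty

-- The reflection in the common wall sends `zyA₀` both to `tzyA₀` and to `zsyA₀`.
theorem simple_mul_eq_mul_simple_of_wall_eq {s t : S.B} {z y : S.W}
    (h : S.wall t (z * y) = S.wall s y) : S.cs.simple t * z = z * S.cs.simple s := by
  have e1 := S.reflPt_wall_alcove t (z * y) 1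
  have e2 := S.reflPt_wall_alcove s y z
  rw [h, one_mul, e2, one_mul] at e1
  have hzy := alcove_injective e1
  rw [← mul_assoc, mul_left_inj] at hzy
  exact hzy.symm

theorem wall_mem_sepA0_mul_iff {s : S.B} {x : S.W} (y : S.W)
    (hx : S.cs.length (x * S.cs.simple s) = S.cs.length x + 1) :
    S.wall s y ∈ S.sepA0 (x * (S.cs.simple s * y)) ↔ S.wall s y ∈ S.sepA0 (S.cs.simple s * y) := by
  induction hn : S.cs.length x generalizing x with
  | zero => rw [S.cs.length_eq_zero_iff.mp hn, one_mul]
  | succ n ih =>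
    obtain ⟨t, ht⟩ := S.cs.exists_leftDescent_of_ne_one (w := x) (by rintro rfl; simp at hn)
    obtain ⟨x', rfl⟩ : ∃ x', x = S.cs.simple t * x' :=
      ⟨_, (S.cs.simple_mul_simple_cancel_left t).symm⟩
    rw [S.cs.isLeftDescent_iff, S.cs.simple_mul_simple_cancel_left] at ht
    have hx' : S.cs.length (x' * S.cs.simple s) = S.cs.length x' + 1 := by
      rcases S.cs.length_mul_simple x' s with h | h
      · exact h
      · rcases S.cs.length_simple_mul (x' * S.cs.simple s) t with h' | h' <;>
          rw [← mul_assoc] at h' <;> omega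
    have hne : S.wall s y ≠ S.wall t (x' * (S.cs.simple s * y)) := by
      intro h
      rw [← mul_assoc] at h
      have h' := simple_mul_eq_mul_simple_of_wall_eq h.symm
      rw [S.cs.simple_mul_simple_cancel_right, ← mul_assoc] at h'
      rw [h'] at hx
      omega
    rw [mul_assoc, sepA0_simple_mul, Set.mem_symmDiff, Set.mem_singleton_iff, ih hx' (by omega)]
    simp only [hne, not_false_eq_true, and_true, false_and, or_false]

theorem Hxy_eq_sepA0_diff (x y : S.W) : S.Hxy x y = S.sepA0 y \ S.sepA0 (x * y) := by
  change S.sepA0 y ∩ _ = _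
  rw [sep_alcove_eq_symmDiff]
  ext H
  simp only [Set.mem_inter_iff, Set.mem_symmDiff, Set.mem_sdiff]
  tauto

end AlcoveSetup

/-- If `x < xs` and `y < sy` then `H_{xs,y} = H_{x,sy}`. -/
theorem Hxy_xs_eq_Hxy_sy (S : AlcoveSetup) (x y : S.W) (s : S.B)
    (hx : S.cs.length (x * S.cs.simple s) = S.cs.length x + 1)
    (hy : S.cs.length (S.cs.simple s * y) = S.cs.length y + 1) :
    S.toAlcoveData.Hxy (x * S.cs.simple s) y = S.toAlcoveData.Hxy x (S.cs.simple s * y) := by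
  have hsy : S.sepA0 (S.cs.simple s * y) = insert (S.wall s y) (S.sepA0 y) :=
    (S.cross_up s y hy).2
  have hwall : S.wall s y ∈ S.sepA0 (x * (S.cs.simple s * y)) :=
    (AlcoveSetup.wall_mem_sepA0_mul_iff y hx).mpr (hsy ▸ Set.mem_insert _ _)
  rw [AlcoveSetup.Hxy_eq_sepA0_diff, AlcoveSetup.Hxy_eq_sepA0_diff, mul_assoc, hsy,
    Set.insert_sdiff_of_mem _ hwall]
end

section
/- Let (W,S) be a Coxeter system with Hecke algebra H, J ⊂ S with W_J finite with longest element w_J, z ∈ W with ℓ(w_J z) = ℓ(w_J) + ℓ(z), and set v = w_J z. Then the A-submodule M := ⟨T_x C_v : x ∈ X_J⟩ of H is a left ideal of H. -/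
/-- The generic Iwahori-Hecke algebra of a Coxeter system `(W,S)` over `A = ℤ[v,v⁻¹]`
with parameters `L(s)`, standard basis `{T_w}`, bar involution, and
Kazhdan–Lusztig basis `{C_w}` (characterized by bar-invariance and
`C_w = T_w + Σ_{y} P_{y,w} T_y` with `P_{y,w} ∈ v⁻¹ℤ[v⁻¹]` for `y ≠ w`). -/
structure KLAlg {B W : Type*} [Group W] {M : CoxeterMatrix B} (cs : CoxeterSystem M W)
    (L : W → ℤ) where
  carrier : Type*
  [ringCarrier : Ring carrier]
  [algCarrier : Algebra (LaurentPolynomial ℤ) carrier]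
  T : Module.Basis W (LaurentPolynomial ℤ) carrier
  T_one : T 1 = 1
  T_mul_of_lt : ∀ (s : B) (w : W), cs.length (cs.simple s * w) = cs.length w + 1 →
    T (cs.simple s) * T w = T (cs.simple s * w)
  T_mul_of_gt : ∀ (s : B) (w : W), cs.length (cs.simple s * w) + 1 = cs.length w →
    T (cs.simple s) * T w
      = T (cs.simple s * w)
        + ((LaurentPolynomial.T (L (cs.simple s)) - LaurentPolynomial.T (-(L (cs.simple s)))
            : LaurentPolynomial ℤ)) • T w
  /-- The bar involution `v ↦ v⁻¹`, `T_w ↦ T_{w⁻¹}⁻¹`. -/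
  bar : carrier → carrier
  bar_add : ∀ a b : carrier, bar (a + b) = bar a + bar b
  bar_mul : ∀ a b : carrier, bar (a * b) = bar a * bar b
  bar_smul : ∀ (c : LaurentPolynomial ℤ) (h : carrier),
    bar (c • h) = (LaurentPolynomial.invert c) • bar h
  bar_T : ∀ w : W, bar (T w) * T w⁻¹ = 1 ∧ T w⁻¹ * bar (T w) = 1
  /-- The Kazhdan–Lusztig basis. -/
  C : Module.Basis W (LaurentPolynomial ℤ) carrier
  C_bar : ∀ w : W, bar (C w) = C w
  C_diag : ∀ w : W, T.repr (C w) w = 1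
  C_off : ∀ w y : W, y ≠ w → (T.repr (C w) y).degree < 0

attribute [instance] KLAlg.ringCarrier KLAlg.algCarrier

/-- The Bruhat order on a Coxeter group: `x ≤ y` iff `y` is obtained from `x` by
successively multiplying by reflections, increasing the length at each step. -/
def CoxeterSystem.bruhatLE {B W : Type*} [Group W] {M : CoxeterMatrix B}
    (cs : CoxeterSystem M W) : W → W → Prop :=
  Relation.ReflTransGen fun a b =>
    (∃ t : W, cs.IsReflection t ∧ b = a * t) ∧ cs.length a < cs.length b

namespace KLAlg

variable {B W : Type*} [Group W] {M : CoxeterMatrix B} {cs : CoxeterSystem M W} {L : W → ℤ}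

/-- The Kazhdan–Lusztig left preorder `≤_L`, generated by: `y ≤_L w` if `C_y` appears
with nonzero coefficient in `T_s C_w` for some `s ∈ S`. -/
def leL (H : KLAlg cs L) : W → W → Prop :=
  Relation.ReflTransGen fun a b => ∃ s : B, H.C.repr (H.T (cs.simple s) * H.C b) a ≠ 0

/-- The Kazhdan–Lusztig right preorder `≤_R`. -/
def leR (H : KLAlg cs L) : W → W → Prop :=
  Relation.ReflTransGen fun a b => ∃ s : B, H.C.repr (H.C b * H.T (cs.simple s)) a ≠ 0

/-- The Kazhdan–Lusztig two-sided preorder `≤_LR`. -/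
def leLR (H : KLAlg cs L) : W → W → Prop :=
  Relation.ReflTransGen fun a b =>
    (∃ s : B, H.C.repr (H.T (cs.simple s) * H.C b) a ≠ 0) ∨
    (∃ s : B, H.C.repr (H.C b * H.T (cs.simple s)) a ≠ 0)

/-- `∼_L` : being in the same left cell. -/
def eqL (H : KLAlg cs L) (a b : W) : Prop := H.leL a b ∧ H.leL b a

/-- `∼_R` : being in the same right cell. -/
def eqR (H : KLAlg cs L) (a b : W) : Prop := H.leR a b ∧ H.leR b a

/-- `∼_LR` : being in the same two-sided cell. -/
def eqLR (H : KLAlg cs L) (a b : W) : Prop := H.leLR a b ∧ H.leLR b a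

end KLAlg

/-- Abstract data of the set `T` of special points of the geometric realization of an
irreducible affine Weyl group: each special point `λ` has a set `S_λ ⊆ S` of simple
reflections generating its (finite, maximal parabolic) stabilizer `W_λ`, whose longest
element `w_λ` has maximal weight among longest elements of finite parabolic subgroups;
all the `W_λ` are isomorphic to the finite Weyl group `W₀`, and `T` carries the
equivalence relation "being in the same `Ω`-orbit". -/
structure SpecialPoints {B W : Type*} [Group W] {M : CoxeterMatrix B}
    (cs : CoxeterSystem M W) (L : W → ℤ) where
  pt : Type*
  Sp : pt → Set B
  stab_finite : ∀ lam : pt, (Subgroup.closure (cs.simple '' Sp lam) : Set W).Finite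
  wl : pt → W
  wl_mem : ∀ lam : pt, wl lam ∈ Subgroup.closure (cs.simple '' Sp lam)
  wl_longest : ∀ lam : pt, ∀ u ∈ Subgroup.closure (cs.simple '' Sp lam),
    cs.length u ≤ cs.length (wl lam)
  wl_max_weight : ∀ (lam : pt) (J : Set B), (Subgroup.closure (cs.simple '' J) : Set W).Finite →
    ∀ u ∈ Subgroup.closure (cs.simple '' J), L u ≤ L (wl lam)
  /-- the cardinality of the finite Weyl group `W₀` -/
  W0card : ℕ
  stab_card : ∀ lam : pt, Nat.card (Subgroup.closure (cs.simple '' Sp lam)) = W0card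
  /-- `Ω`-orbit equivalence on special points -/
  orb : pt → pt → Prop
  orb_equivalence : Equivalence orb

namespace SpecialPoints

variable {B W : Type*} [Group W] {M : CoxeterMatrix B} {cs : CoxeterSystem M W} {L : W → ℤ}

/-- The lowest two-sided cell
`c₀ = {w ∈ W : w = z'.w_λ.z reduced, z,z' ∈ W, λ ∈ T}`. -/
def c0 (SP : SpecialPoints cs L) : Set W :=
  {w : W | ∃ (lam : SP.pt) (z' z : W), w = z' * SP.wl lam * z ∧
    cs.length (z' * SP.wl lam * z) = cs.length z' + cs.length (SP.wl lam) + cs.length z}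

/-- `X_λ`, the set of minimal length left coset representatives of `W_λ`. -/
def Xl (SP : SpecialPoints cs L) (lam : SP.pt) : Set W :=
  {w : W | ∀ s ∈ SP.Sp lam, cs.length w < cs.length (w * cs.simple s)}

/-- `M_λ = {z : w_λ z reduced and s w_λ z ∉ c₀ for all s ∈ S_λ}`. -/
def Ml (SP : SpecialPoints cs L) (lam : SP.pt) : Set W :=
  {z : W | cs.length (SP.wl lam * z) = cs.length (SP.wl lam) + cs.length z ∧
    ∀ s ∈ SP.Sp lam, cs.simple s * SP.wl lam * z ∉ SP.c0}

/-- `N_{λ,z} = {x w_λ z : x ∈ X_λ}`. -/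
def Nl (SP : SpecialPoints cs L) (lam : SP.pt) (z : W) : Set W :=
  (fun x => x * SP.wl lam * z) '' SP.Xl lam

end SpecialPoints

/-!
Every `s ∈ J` is a left descent of `v = w_J z`, and for a left descent `s` of `w` the
Kazhdan–Lusztig identity `T_s C_w = v^{L(s)} C_w` holds. Peeling right descents in `J` off `u`
until it lies in `X_J` therefore puts every `T_u C_v` in the span, which is thus the left ideal
`H C_v`.

The identity is proved by induction on `ℓ(w)`. Write `C_w = Σ p_{y,w} T_y`. The element
`C_s C_{sw} - C_w` is bar-invariant and a combination of `C_x` with `ℓ(x) < ℓ(w)`; by induction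
its part over the `x` with `sx < x` is a `v^{L(s)}`-eigenvector of `T_s`, and so is `C_s C_{sw}`.
The remaining part `k`, over the `x` with `sx > x`, vanishes: at a longest such `x` the eigenvector
equation for `C_w + k` makes the coefficient of `C_x` in `k` equal to
`v^{-L(s)} p_{sx,w} - p_{x,w}`, a bar-invariant Laurent polynomial of negative degree (as
`L(s) > 0`), hence zero.
-/

namespace LaurentPolynomial

lemma degree_mul_le {R : Type*} [Semiring R] (f g : R[T;T⁻¹]) :
    (f * g).degree ≤ f.degree + g.degree := by
  simp only [degree, Finset.max_eq_sup_withBot]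
  exact AddMonoidAlgebra.supDegree_mul_le fun a b => WithBot.coe_add a b

lemma degree_T_mul_le {R : Type*} [Semiring R] (n : ℤ) (f : R[T;T⁻¹]) :
    (T n * f).degree ≤ n + f.degree :=
  (degree_mul_le _ _).trans (by gcongr; exact degree_T_le n)

lemma degree_sub_le {R : Type*} [Ring R] (f g : R[T;T⁻¹]) :
    (f - g).degree ≤ max f.degree g.degree := by
  simp only [degree, Finset.max_eq_sup_withBot]
  exact AddMonoidAlgebra.supDegree_sub_le

lemma eq_zero_of_invert_eq_self_of_degree_neg {R : Type*} [CommSemiring R] {p : R[T;T⁻¹]}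
    (hp : invert p = p) (hdeg : p.degree < 0) : p = 0 := by
  by_contra hne
  obtain ⟨n, hn⟩ := WithBot.ne_bot_iff_exists.mp (mt degree_eq_bot_iff.mp hne)
  have hn_neg : n < 0 := by exact_mod_cast hn ▸ hdeg
  have hmem : -n ∈ p.coeff.support := by
    rw [Finsupp.mem_support_iff, ← invert_apply, hp]
    exact Finsupp.mem_support_iff.mp (Finset.mem_of_max hn.symm)
  have : ((-n : ℤ) : WithBot ℤ) < 0 := (Finset.le_max hmem).trans_lt hdeg
  have : -n < 0 := by exact_mod_cast this
  omega

end LaurentPolynomial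

namespace CoxeterSystem

variable {B W : Type*} [Group W] {M : CoxeterMatrix B} (cs : CoxeterSystem M W)

theorem reduced_simple_induction_left {p : W → Prop} (w : W) (one : p 1)
    (mul_simple_left : ∀ (w : W) (i : B), ¬cs.IsLeftDescent w i → p w → p (cs.simple i * w)) :
    p w := by
  induction w using (InvImage.wf cs.length wellFounded_lt).induction with
  | _ w ih =>
  by_cases hw : w = 1
  · exact hw ▸ one
  obtain ⟨i, hi⟩ := cs.exists_leftDescent_of_ne_one hw
  rw [← cs.simple_mul_simple_cancel_left (w := w) i]
  exact mul_simple_left _ i (cs.isLeftDescent_iff_not_isLeftDescent_mul.mp hi) (ih _ hi)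

theorem simple_ne_one (i : B) : cs.simple i ≠ 1 := fun h => by
  simpa [h] using cs.length_simple i

variable {cs}

theorem IsLeftDescent.mul_of_length_mul {w z : W} {i : B} (hw : cs.IsLeftDescent w i)
    (hwz : cs.length (w * z) = cs.length w + cs.length z) : cs.IsLeftDescent (w * z) i := by
  have := cs.length_mul_le (cs.simple i * w) z
  rw [mul_assoc] at this
  unfold IsLeftDescent at hw ⊢
  omega

theorem isLeftDescent_of_forall_length_le {K : Subgroup W} {w : W} (hw : w ∈ K)
    (hlong : ∀ u ∈ K, cs.length u ≤ cs.length w) {i : B} (hi : cs.simple i ∈ K) :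
    cs.IsLeftDescent w i :=
  lt_of_le_of_ne (hlong _ (K.mul_mem hi hw)) (cs.length_simple_mul_ne w i)

end CoxeterSystem

lemma Module.Basis.mul_eq_smul_of_forall_mem_support {ι R A : Type*} [CommSemiring R] [Ring A]
    [Algebra R A] (b : Module.Basis ι R A) {a x : A} {c : R}
    (h : ∀ i ∈ (b.repr x).support, a * b i = c • b i) : a * x = c • x := by
  have hker : x ∈ LinearMap.ker (LinearMap.mulLeft R a - c • LinearMap.id) := by
    refine Submodule.span_le.mpr ?_ (b.mem_span_repr_support x)
    rintro _ ⟨i, hi, rfl⟩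
    simp [h i hi]
  simpa [sub_eq_zero] using hker

lemma Module.Basis.mul_mem_of_forall_mul_mem {ι R A : Type*} [CommSemiring R] [Semiring A]
    [Algebra R A] (b : Module.Basis ι R A) {N : Submodule R A} {c : A}
    (h : ∀ i, b i * c ∈ N) (a : A) : a * c ∈ N :=
  Submodule.span_le (p := N.comap (LinearMap.mulRight R c)) |>.mpr
    (Set.range_subset_iff.mpr h) (b.mem_span a)

namespace KLAlg

open LaurentPolynomial

local notation "v^" n:max => (LaurentPolynomial.T n : ℤ[T;T⁻¹])

variable {B W : Type*} [Group W] {M : CoxeterMatrix B} {cs : CoxeterSystem M W} {L : W → ℤ}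
  (H : KLAlg cs L)

noncomputable def barSemilinear :
    H.carrier →ₛₗ[(invert : ℤ[T;T⁻¹] ≃ₐ[ℤ] ℤ[T;T⁻¹]).toRingEquiv.toRingHom] H.carrier where
  toFun := H.bar
  map_add' := H.bar_add
  map_smul' := H.bar_smul

lemma barSemilinear_apply (h : H.carrier) : H.barSemilinear h = H.bar h := rfl

lemma bar_sub (a b : H.carrier) : H.bar (a - b) = H.bar a - H.bar b :=
  map_sub H.barSemilinear a b

lemma bar_one : H.bar 1 = 1 := by
  simpa [H.T_one] using (H.bar_T 1).1

lemma T_simple_mul_self (s : B) :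
    H.T (cs.simple s) * H.T (cs.simple s)
      = 1 + (v^(L (cs.simple s)) - v^(-L (cs.simple s))) • H.T (cs.simple s) := by
  have h := H.T_mul_of_gt s (cs.simple s) (by simp [cs.length_simple])
  rwa [cs.simple_mul_simple_self, H.T_one] at h

lemma bar_T_simple (s : B) :
    H.bar (H.T (cs.simple s))
      = H.T (cs.simple s) - (v^(L (cs.simple s)) - v^(-L (cs.simple s))) • 1 := by
  have hinv : H.T (cs.simple s) * H.bar (H.T (cs.simple s)) = 1 := by
    simpa [cs.inv_simple] using (H.bar_T (cs.simple s)).2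
  have hleft : (H.T (cs.simple s) - (v^(L (cs.simple s)) - v^(-L (cs.simple s))) • 1)
      * H.T (cs.simple s) = 1 := by
    rw [sub_mul, smul_mul_assoc, one_mul, T_simple_mul_self]
    abel
  calc H.bar (H.T (cs.simple s))
      = (H.T (cs.simple s) - (v^(L (cs.simple s)) - v^(-L (cs.simple s))) • 1)
          * H.T (cs.simple s) * H.bar (H.T (cs.simple s)) := by rw [hleft, one_mul]
    _ = _ := by rw [mul_assoc, hinv, mul_one]

noncomputable def Cs (s : B) : H.carrier := H.T (cs.simple s) + v^(-L (cs.simple s)) • 1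

lemma Cs_mul (s : B) (h : H.carrier) :
    H.Cs s * h = H.T (cs.simple s) * h + v^(-L (cs.simple s)) • h := by
  rw [Cs, add_mul, smul_mul_assoc, one_mul]

lemma bar_Cs (s : B) : H.bar (H.Cs s) = H.Cs s := by
  rw [Cs, H.bar_add, H.bar_smul, bar_one, bar_T_simple, invert_T, neg_neg]
  module

lemma T_simple_mul_Cs (s : B) :
    H.T (cs.simple s) * H.Cs s = v^(L (cs.simple s)) • H.Cs s := by
  rw [Cs, mul_add, mul_smul_comm, mul_one, T_simple_mul_self, smul_add, smul_smul,
    ← T_add, add_neg_cancel, T_zero, one_smul]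
  module

open scoped Classical in
lemma T_repr_T_simple_mul (s : B) (h : H.carrier) (y : W) :
    H.T.repr (H.T (cs.simple s) * h) y
      = H.T.repr h (cs.simple s * y)
        + (if cs.IsLeftDescent y s then v^(L (cs.simple s)) - v^(-L (cs.simple s)) else 0)
          * H.T.repr h y := by
  set q := if cs.IsLeftDescent y s then v^(L (cs.simple s)) - v^(-L (cs.simple s)) else 0
  have hswap : ∀ x, cs.simple s * x = y ↔ x = cs.simple s * y := fun x => by
    constructor <;> rintro rfl <;> simp [cs.simple_mul_simple_cancel_left]
  have on_basis : ∀ x, H.T.repr (H.T (cs.simple s) * H.T x) y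
      = H.T.repr (H.T x) (cs.simple s * y) + q * H.T.repr (H.T x) y := fun x => by
    by_cases hx : cs.IsLeftDescent x s
    · rw [H.T_mul_of_gt s x (cs.isLeftDescent_iff.mp hx)]
      obtain rfl | hxy := eq_or_ne x y
      · simp [q, hx, Finsupp.single_apply, hswap]
      · simp [q, hxy, Finsupp.single_apply, hswap]
    · rw [H.T_mul_of_lt s x (cs.not_isLeftDescent_iff.mp hx)]
      obtain rfl | hxy := eq_or_ne x y
      · simp [q, hx, Finsupp.single_apply, hswap]
      · simp [q, hxy, Finsupp.single_apply, hswap]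
  let lhs := Finsupp.lapply y ∘ₗ H.T.repr.toLinearMap ∘ₗ
    LinearMap.mulLeft ℤ[T;T⁻¹] (H.T (cs.simple s))
  let rhs := Finsupp.lapply (cs.simple s * y) ∘ₗ H.T.repr.toLinearMap
    + q • Finsupp.lapply y ∘ₗ H.T.repr.toLinearMap
  exact LinearMap.congr_fun (H.T.ext (f₁ := lhs) (f₂ := rhs) on_basis) h

lemma T_repr_eq_of_T_simple_mul_eq {s : B} {h : H.carrier}
    (heig : H.T (cs.simple s) * h = v^(L (cs.simple s)) • h) {y : W}
    (hy : ¬cs.IsLeftDescent y s) :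
    H.T.repr h y = v^(-L (cs.simple s)) * H.T.repr h (cs.simple s * y) := by
  have hsy : cs.IsLeftDescent (cs.simple s * y) s := by
    rwa [cs.isLeftDescent_iff_not_isLeftDescent_mul, cs.simple_mul_simple_cancel_left]
  have key := H.T_repr_T_simple_mul s h (cs.simple s * y)
  rw [heig, if_pos hsy, cs.simple_mul_simple_cancel_left, map_smul, Finsupp.smul_apply,
    smul_eq_mul] at key
  linear_combination -key

def IsUnitriangularAt (h : H.carrier) (w : W) : Prop :=
  H.T.repr h w = 1 ∧ ∀ y, y ≠ w → H.T.repr h y ≠ 0 → cs.length y < cs.length w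

variable {H}

lemma isUnitriangularAt_T (w : W) : H.IsUnitriangularAt (H.T w) w :=
  ⟨by simp, fun y hyw hy => absurd (by simp [Ne.symm hyw]) hy⟩

namespace IsUnitriangularAt

lemma repr_eq_zero {h : H.carrier} {w : W} (hh : H.IsUnitriangularAt h w) {y : W} (hyw : y ≠ w)
    (hy : cs.length w ≤ cs.length y) : H.T.repr h y = 0 :=
  by_contra fun hne => absurd (hh.2 y hyw hne) (by omega)

lemma repr_sub_eq_zero {h h' : H.carrier} {w : W} (hh : H.IsUnitriangularAt h w)
    (hh' : H.IsUnitriangularAt h' w) {y : W} (hy : cs.length w ≤ cs.length y) :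
    H.T.repr (h - h') y = 0 := by
  rw [map_sub, Finsupp.sub_apply]
  by_cases hyw : y = w
  · rw [hyw, hh.1, hh'.1, sub_self]
  · rw [hh.repr_eq_zero hyw hy, hh'.repr_eq_zero hyw hy, sub_self]

lemma T_simple_mul_add_smul {h : H.carrier} {u : W} (hh : H.IsUnitriangularAt h u) {s : B}
    (hu : ¬cs.IsLeftDescent u s) (c : ℤ[T;T⁻¹]) :
    H.IsUnitriangularAt (H.T (cs.simple s) * h + c • h) (cs.simple s * u) := by
  have hsu := cs.not_isLeftDescent_iff.mp hu
  have hrepr : ∀ y, H.T.repr (H.T (cs.simple s) * h + c • h) y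
      = H.T.repr h (cs.simple s * y) + (_ + c) * H.T.repr h y := fun y => by
    rw [map_add, Finsupp.add_apply, T_repr_T_simple_mul, map_smul, Finsupp.smul_apply,
      smul_eq_mul, add_mul, add_assoc]
  refine ⟨?_, fun y hy hne => ?_⟩
  · have hne : cs.simple s * u ≠ u := fun h => by rw [h] at hsu; omega
    rw [hrepr, cs.simple_mul_simple_cancel_left, hh.1, hh.repr_eq_zero hne (by omega), mul_zero,
      add_zero]
  · rw [hrepr] at hne
    have hy_le := cs.length_simple_mul y s
    by_cases hsy : H.T.repr h (cs.simple s * y) = 0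
    · rw [hsy, zero_add] at hne
      have hy := right_ne_zero_of_mul hne
      by_cases hyu : y = u
      · rw [hyu]; omega
      · have := hh.2 y hyu hy; omega
    · have hsyu : cs.simple s * y ≠ u := fun h => hy (by rw [← h, cs.simple_mul_simple_cancel_left])
      have := hh.2 _ hsyu hsy
      omega

end IsUnitriangularAt

variable (H)

lemma isUnitriangularAt_bar_T (w : W) : H.IsUnitriangularAt (H.bar (H.T w)) w := by
  induction w using cs.reduced_simple_induction_left with
  | one => rw [H.T_one, bar_one, ← H.T_one]; exact isUnitriangularAt_T 1
  | mul_simple_left w i hw ih =>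
    rw [← H.T_mul_of_lt i w (cs.not_isLeftDescent_iff.mp hw), H.bar_mul, bar_T_simple, sub_mul,
      smul_mul_assoc, one_mul, sub_eq_add_neg, ← neg_smul]
    exact ih.T_simple_mul_add_smul hw _

lemma T_repr_bar_of_forall_length_le (h : H.carrier) (y : W)
    (hmax : ∀ x, H.T.repr h x ≠ 0 → cs.length x ≤ cs.length y) :
    H.T.repr (H.bar h) y = invert (H.T.repr h y) := by
  conv_lhs => rw [← H.T.linearCombination_repr h]
  rw [Finsupp.linearCombination_apply, ← barSemilinear_apply, map_finsuppSum, map_finsuppSum,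
    Finsupp.sum_apply, Finsupp.sum_eq_single y]
  · rw [map_smulₛₗ, barSemilinear_apply]
    simp [(H.isUnitriangularAt_bar_T y).1]
  · intro x hx hxy
    rw [map_smulₛₗ, barSemilinear_apply]
    simp [(H.isUnitriangularAt_bar_T x).repr_eq_zero (Ne.symm hxy) (hmax x hx)]
  · intro _
    rw [zero_smul, map_zero, map_zero, Finsupp.zero_apply]

lemma C_repr_bar (h : H.carrier) (y : W) :
    H.C.repr (H.bar h) y = invert (H.C.repr h y) := by
  conv_lhs => rw [← H.C.linearCombination_repr h]
  rw [Finsupp.linearCombination_apply, ← barSemilinear_apply, map_finsuppSum, map_finsuppSum,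
    Finsupp.sum_apply, Finsupp.sum_eq_single y]
  · rw [map_smulₛₗ, barSemilinear_apply]
    simp [H.C_bar]
  · intro x _ hxy
    rw [map_smulₛₗ, barSemilinear_apply]
    simp [H.C_bar, hxy]
  · intro _
    rw [zero_smul, map_zero, map_zero, Finsupp.zero_apply]

lemma T_repr_C_eq_zero_of_forall_length_le {w y : W} (hyw : y ≠ w)
    (hmax : ∀ x, H.T.repr (H.C w) x ≠ 0 → cs.length x ≤ cs.length y) :
    H.T.repr (H.C w) y = 0 :=
  eq_zero_of_invert_eq_self_of_degree_neg
    (by rw [← T_repr_bar_of_forall_length_le _ _ _ hmax, H.C_bar]) (H.C_off w y hyw)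

lemma isUnitriangularAt_C (w : W) : H.IsUnitriangularAt (H.C w) w := by
  refine ⟨H.C_diag w, fun y hyw hy => ?_⟩
  obtain ⟨m, hm, hmax⟩ := Finset.exists_max_image (H.T.repr (H.C w)).support cs.length
    ⟨y, Finsupp.mem_support_iff.mpr hy⟩
  simp only [Finsupp.mem_support_iff] at hm hmax
  have hmw : m = w := by
    by_contra hmw
    exact hm (H.T_repr_C_eq_zero_of_forall_length_le hmw hmax)
  subst hmw
  refine lt_of_le_of_ne (hmax y hy) fun hlen => hy ?_
  exact H.T_repr_C_eq_zero_of_forall_length_le hyw fun x hx => hlen ▸ hmax x hx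

lemma degree_T_repr_C_le_zero (w y : W) : (H.T.repr (H.C w) y).degree ≤ 0 := by
  by_cases hyw : y = w
  · rw [hyw, H.C_diag, ← map_one LaurentPolynomial.C, degree_C one_ne_zero]
  · exact (H.C_off w y hyw).le

lemma T_repr_eq_C_repr_of_forall_length_le (h : H.carrier) (y : W)
    (hmax : ∀ x, H.C.repr h x ≠ 0 → cs.length x ≤ cs.length y) :
    H.T.repr h y = H.C.repr h y := by
  conv_lhs => rw [← H.C.linearCombination_repr h]
  rw [Finsupp.linearCombination_apply, map_finsuppSum, Finsupp.sum_apply, Finsupp.sum_eq_single y]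
  · simp [H.C_diag]
  · intro x hx hxy
    simp [(H.isUnitriangularAt_C x).repr_eq_zero (Ne.symm hxy) (hmax x hx)]
  · simp

lemma C_repr_eq_zero_of_length_le {h : H.carrier} {n : ℕ}
    (hT : ∀ y, n ≤ cs.length y → H.T.repr h y = 0) {x : W} (hx : n ≤ cs.length x) :
    H.C.repr h x = 0 := by
  by_contra hne
  obtain ⟨m, hm, hmax⟩ := Finset.exists_max_image (H.C.repr h).support cs.length
    ⟨x, Finsupp.mem_support_iff.mpr hne⟩
  simp only [Finsupp.mem_support_iff] at hm hmax
  have hnm : n ≤ cs.length m := hx.trans (hmax x hne)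
  exact hm (H.T_repr_eq_C_repr_of_forall_length_le h m hmax ▸ hT m hnm)

lemma bar_eq_self_iff {h : H.carrier} :
    H.bar h = h ↔ ∀ x, invert (H.C.repr h x) = H.C.repr h x := by
  simp only [H.C.ext_elem_iff, C_repr_bar]

lemma eq_zero_of_T_simple_mul_C_add_eq (hLpos : ∀ w : W, w ≠ 1 → 0 < L w) {s : B} {w : W}
    (hw : cs.IsLeftDescent w s) {k : H.carrier} (hk : H.bar k = k)
    (hk_asc : ∀ x, H.C.repr k x ≠ 0 → ¬cs.IsLeftDescent x s)
    (heig : H.T (cs.simple s) * (H.C w + k) = v^(L (cs.simple s)) • (H.C w + k)) : k = 0 := by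
  by_contra hk0
  obtain ⟨x, hx, hmax⟩ := Finset.exists_max_image (H.C.repr k).support cs.length
    (Finsupp.support_nonempty_iff.mpr (by simpa using hk0))
  simp only [Finsupp.mem_support_iff] at hx hmax
  have hxs := hk_asc x hx
  have hsx := cs.not_isLeftDescent_iff.mp hxs
  have hkx := H.T_repr_eq_C_repr_of_forall_length_le k x hmax
  have hksx : H.T.repr k (cs.simple s * x) = 0 := by
    rw [H.T_repr_eq_C_repr_of_forall_length_le k _ fun y hy => (hmax y hy).trans (by omega)]
    by_contra hne
    have := hmax _ hne
    omega
  have hcoef : H.C.repr k x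
      = v^(-L (cs.simple s)) * H.T.repr (H.C w) (cs.simple s * x) - H.T.repr (H.C w) x := by
    have := H.T_repr_eq_of_T_simple_mul_eq heig hxs
    rw [map_add, Finsupp.add_apply, Finsupp.add_apply, hkx, hksx, add_zero] at this
    linear_combination this
  have hLs := hLpos _ (cs.simple_ne_one s)
  refine hx (eq_zero_of_invert_eq_self_of_degree_neg ((H.bar_eq_self_iff.mp hk) x) ?_)
  rw [hcoef]
  refine (degree_sub_le _ _).trans_lt (max_lt ?_ (H.C_off w x fun h => hxs (h ▸ hw)))
  calc (v^(-L (cs.simple s)) * H.T.repr (H.C w) (cs.simple s * x)).degree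
      ≤ ((-L (cs.simple s) : ℤ) : WithBot ℤ) + 0 :=
        (degree_T_mul_le _ _).trans (by gcongr; exact H.degree_T_repr_C_le_zero _ _)
    _ < 0 := by norm_cast; omega

theorem T_simple_mul_C_of_isLeftDescent (hLpos : ∀ w : W, w ≠ 1 → 0 < L w) {s : B} {w : W}
    (hw : cs.IsLeftDescent w s) :
    H.T (cs.simple s) * H.C w = v^(L (cs.simple s)) • H.C w := by
  classical
  induction w using (InvImage.wf cs.length wellFounded_lt).induction with
  | _ w ih =>
  have hw' := cs.isLeftDescent_iff_not_isLeftDescent_mul.mp hw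
  set e := H.Cs s * H.C (cs.simple s * w)
  have he_eig : H.T (cs.simple s) * e = v^(L (cs.simple s)) • e := by
    rw [← mul_assoc, T_simple_mul_Cs, smul_mul_assoc]
  have he_tri : H.IsUnitriangularAt e w := by
    simpa [e, Cs_mul, cs.simple_mul_simple_cancel_left] using
      (H.isUnitriangularAt_C _).T_simple_mul_add_smul hw' (v^(-L (cs.simple s)))
  set g := e - H.C w
  have hg_bar : H.bar g = g := by rw [bar_sub, H.bar_mul, bar_Cs, H.C_bar, H.C_bar]
  have hg_low : ∀ x, cs.length w ≤ cs.length x → H.C.repr g x = 0 := fun x =>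
    H.C_repr_eq_zero_of_length_le fun _ => he_tri.repr_sub_eq_zero (H.isUnitriangularAt_C w)
  set gdesc := H.C.repr.symm ((H.C.repr g).filter (cs.IsLeftDescent · s))
  set k := H.C.repr.symm ((H.C.repr g).filter fun x => ¬cs.IsLeftDescent x s)
  have hg_split : g = gdesc + k := by
    rw [← map_add, Finsupp.filter_add_filter_not, LinearEquiv.symm_apply_apply]
  have hgdesc : H.T (cs.simple s) * gdesc = v^(L (cs.simple s)) • gdesc := by
    refine H.C.mul_eq_smul_of_forall_mem_support fun x hx => ?_
    simp only [gdesc, LinearEquiv.apply_symm_apply, Finsupp.support_filter,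
      Finset.mem_filter, Finsupp.mem_support_iff] at hx
    exact ih x (not_le.mp fun hle => hx.1 (hg_low x hle)) hx.2
  have hk_bar : H.bar k = k := H.bar_eq_self_iff.mpr fun x => by
    simp only [k, LinearEquiv.apply_symm_apply, Finsupp.filter_apply]
    split_ifs
    · exact map_zero _
    · exact H.bar_eq_self_iff.mp hg_bar x
  have hk_asc : ∀ x, H.C.repr k x ≠ 0 → ¬cs.IsLeftDescent x s := fun x hx hdesc => by
    simp [k, hdesc] at hx
  have hCw : H.C w = e - gdesc - k := by rw [sub_sub, ← hg_split, sub_sub_cancel]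
  have hk : k = 0 := H.eq_zero_of_T_simple_mul_C_add_eq hLpos hw hk_bar hk_asc (by
    rw [hCw, sub_add_cancel, mul_sub, he_eig, hgdesc, smul_sub])
  rw [hCw, hk, sub_zero, mul_sub, he_eig, hgdesc, smul_sub]

lemma T_mul_T_of_length_mul (x y : W) (h : cs.length (x * y) = cs.length x + cs.length y) :
    H.T x * H.T y = H.T (x * y) := by
  induction x using cs.reduced_simple_induction_left generalizing y with
  | one => rw [H.T_one, one_mul, one_mul]
  | mul_simple_left u i hu ih =>
    have hsu := cs.not_isLeftDescent_iff.mp hu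
    have := cs.length_mul_le u y
    have := cs.length_simple_mul (u * y) i
    rw [mul_assoc] at h ⊢
    have huy : cs.length (u * y) = cs.length u + cs.length y := by omega
    rw [← H.T_mul_of_lt i u hsu, mul_assoc, ih y huy, H.T_mul_of_lt i _ (by omega)]

theorem T_mul_C_mem_span (hLpos : ∀ w : W, w ≠ 1 → 0 < L w) {J : Set B} {v : W}
    (hv : ∀ i ∈ J, cs.IsLeftDescent v i) (u : W) :
    H.T u * H.C v ∈ Submodule.span (LaurentPolynomial ℤ) ((fun x => H.T x * H.C v) ''
      {w : W | ∀ s ∈ J, cs.length w < cs.length (w * cs.simple s)}) := by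
  induction u using (InvImage.wf cs.length wellFounded_lt).induction with
  | _ u ih =>
  by_cases hu : ∀ s ∈ J, cs.length u < cs.length (u * cs.simple s)
  · exact Submodule.subset_span ⟨u, hu, rfl⟩
  push Not at hu
  obtain ⟨i, hi, hle⟩ := hu
  have hdesc := cs.isRightDescent_iff.mp (lt_of_le_of_ne hle (cs.length_mul_simple_ne u i))
  have hTu : H.T u = H.T (u * cs.simple i) * H.T (cs.simple i) := by
    rw [H.T_mul_T_of_length_mul, cs.simple_mul_simple_cancel_right]
    rw [cs.simple_mul_simple_cancel_right, cs.length_simple]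
    omega
  rw [hTu, mul_assoc, H.T_simple_mul_C_of_isLeftDescent hLpos (hv i hi), mul_smul_comm]
  exact Submodule.smul_mem _ _ (ih _ (show cs.length (u * cs.simple i) < cs.length u by omega))

end KLAlg

theorem span_T_C_is_left_ideal_general {B W : Type*} [Group W] {M : CoxeterMatrix B}
    (cs : CoxeterSystem M W) (L : W → ℤ)
    (hLpos : ∀ w : W, w ≠ 1 → 0 < L w)
    (H : KLAlg cs L) (J : Set B)
    (wJ : W) (hwJ : wJ ∈ Subgroup.closure (cs.simple '' J))
    (hlong : ∀ u ∈ Subgroup.closure (cs.simple '' J), cs.length u ≤ cs.length wJ)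
    (z : W) (hz : cs.length (wJ * z) = cs.length wJ + cs.length z) :
    ∀ h m : H.carrier,
      m ∈ Submodule.span (LaurentPolynomial ℤ)
        ((fun x => H.T x * H.C (wJ * z)) ''
          {w : W | ∀ s ∈ J, cs.length w < cs.length (w * cs.simple s)}) →
      h * m ∈ Submodule.span (LaurentPolynomial ℤ)
        ((fun x => H.T x * H.C (wJ * z)) ''
          {w : W | ∀ s ∈ J, cs.length w < cs.length (w * cs.simple s)}) := by
  intro h m hm
  have hdesc : ∀ i ∈ J, cs.IsLeftDescent (wJ * z) i := fun i hi =>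
    (cs.isLeftDescent_of_forall_length_le hwJ hlong
      (Subgroup.subset_closure ⟨i, hi, rfl⟩)).mul_of_length_mul hz
  have hmul := H.T.mul_mem_of_forall_mul_mem (H.T_mul_C_mem_span hLpos hdesc)
  induction hm using Submodule.span_induction with
  | mem _ hx =>
    obtain ⟨x, -, rfl⟩ := hx
    simpa [mul_assoc] using hmul (h * H.T x)
  | zero => rw [mul_zero]; exact zero_mem _
  | add _ _ _ _ hx hy => rw [mul_add]; exact add_mem hx hy
  | smul c _ _ hx => rw [mul_smul_comm]; exact Submodule.smul_mem _ c hx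

/-- For `v = w_J z` with `ℓ(w_J z) = ℓ(w_J) + ℓ(z)`, the `A`-submodule
`M = ⟨T_x C_v : x ∈ X_J⟩` of the Hecke algebra is a left ideal. -/
theorem span_T_C_is_left_ideal {B W : Type*} [Group W] {M : CoxeterMatrix B}
    (cs : CoxeterSystem M W) (L : W → ℤ)
    (hL : ∀ x y : W, cs.length (x * y) = cs.length x + cs.length y → L (x * y) = L x + L y)
    (hLpos : ∀ w : W, w ≠ 1 → 0 < L w)
    (H : KLAlg cs L) (J : Set B)
    (hfin : (Subgroup.closure (cs.simple '' J) : Set W).Finite)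
    (wJ : W) (hwJ : wJ ∈ Subgroup.closure (cs.simple '' J))
    (hlong : ∀ u ∈ Subgroup.closure (cs.simple '' J), cs.length u ≤ cs.length wJ)
    (z : W) (hz : cs.length (wJ * z) = cs.length wJ + cs.length z) :
    ∀ h m : H.carrier,
      m ∈ Submodule.span (LaurentPolynomial ℤ)
        ((fun x => H.T x * H.C (wJ * z)) ''
          {w : W | ∀ s ∈ J, cs.length w < cs.length (w * cs.simple s)}) →
      h * m ∈ Submodule.span (LaurentPolynomial ℤ)
        ((fun x => H.T x * H.C (wJ * z)) ''
          {w : W | ∀ s ∈ J, cs.length w < cs.length (w * cs.simple s)}) :=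
  span_T_C_is_left_ideal_general cs L hLpos H J wJ hwJ hlong z hz
end
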